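/- Product property of QDQs: if Λ_F and Λ_G are QDQs of set-valued maps F : ℝᴺ ⇝ ℝⁿ and G : ℝᴺ ⇝ ℝᵐ at (x̄, ȳ_F) and (x̄, ȳ_G) in the directions Γ_F and Γ_G respectively, then the set Λ_F × Λ_G := {(L,M) : L ∈ Λ_F, M ∈ Λ_G}, viewed inside Lin(ℝᴺ, ℝⁿ × ℝᵐ), is a QDQ of the map x ⇝ F(x) × G(x) at (x̄, (ȳ_F, ȳ_G)) in the direction of Γ_F ∩ Γ_G. -/

import Mathlib

open Filter Topology Metric
open scoped ENNReal NNReal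

/-- A pseudo-modulus: monotone nondecreasing on ℝ₊, with value 0 at 0 and
right-limit 0 at 0 (values in `ℝ≥0∞`, i.e. ℝ₊ ∪ {+∞}). -/
def IsPseudoModulus (ρ : ℝ → ℝ≥0∞) : Prop :=
  (∀ ⦃s t : ℝ⦄, 0 ≤ s → s ≤ t → ρ s ≤ ρ t) ∧ ρ 0 = 0 ∧
    Tendsto ρ (𝓝[>] (0 : ℝ)) (𝓝 0)

/-- `Λ` is a Quasi Differential Quotient (QDQ) of the set-valued map `Fm` at
`(x₀, y₀)` in the direction of `Γ`. -/
def IsQDQ {E F : Type*} [NormedAddCommGroup E] [NormedSpace ℝ E]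
    [NormedAddCommGroup F] [NormedSpace ℝ F]
    (Λ : Set (E →L[ℝ] F)) (Fm : E → Set F) (x₀ : E) (y₀ : F) (Γ : Set E) : Prop :=
  IsCompact Λ ∧ ∃ ρ : ℝ → ℝ≥0∞, IsPseudoModulus ρ ∧
    ∀ δ : ℝ, 0 < δ → ρ δ < ⊤ →
      ∃ (L : E → (E →L[ℝ] F)) (h : E → F),
        ContinuousOn (fun x => (L x, h x)) (closedBall x₀ δ ∩ Γ) ∧
        ∀ x ∈ closedBall x₀ δ ∩ Γ,
          infDist (L x) Λ ≤ (ρ δ).toReal ∧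
          ‖h x‖ ≤ δ * (ρ δ).toReal ∧
          y₀ + L x (x - x₀) + h x ∈ Fm x

/-! Pair the approximating data of `F` and `G` componentwise and take `ρF + ρG` as the
pseudo-modulus. Since `L ↦ L.prod M` is an isometry onto its image with the max norm on pairs,
distances to `ΛF × ΛG` and the size of the remainders are maxima of the componentwise ones. -/

namespace Metric

variable {α β : Type*} [PseudoMetricSpace α] [PseudoMetricSpace β]

-- Not an equality: if one factor is empty, `infDist` to the product is the junk value `0`.
theorem infDist_prod_le (x : α × β) (s : Set α) (t : Set β) :
    infDist x (s ×ˢ t) ≤ max (infDist x.1 s) (infDist x.2 t) := by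
  simp only [infDist, infEDist_prod]
  rcases eq_or_ne (infEDist x.1 s) ⊤ with hs | hs
  · simp [hs]
  rcases eq_or_ne (infEDist x.2 t) ⊤ with ht | ht
  · simp [ht]
  exact (ENNReal.toReal_max hs ht).le

end Metric

theorem IsPseudoModulus.add {ρ σ : ℝ → ℝ≥0∞} (hρ : IsPseudoModulus ρ) (hσ : IsPseudoModulus σ) :
    IsPseudoModulus (ρ + σ) := by
  obtain ⟨hρ_mono, hρ_zero, hρ_lim⟩ := hρ
  obtain ⟨hσ_mono, hσ_zero, hσ_lim⟩ := hσ
  refine ⟨fun s t hs hst => add_le_add (hρ_mono hs hst) (hσ_mono hs hst), ?_, ?_⟩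
  · simp [hρ_zero, hσ_zero]
  · exact add_zero (0 : ℝ≥0∞) ▸ hρ_lim.add hσ_lim

namespace ContinuousLinearMap

variable {E F G : Type*} [NormedAddCommGroup E] [NormedSpace ℝ E]
  [NormedAddCommGroup F] [NormedSpace ℝ F] [NormedAddCommGroup G] [NormedSpace ℝ G]

theorem setOf_prod_eq_image_prodₗᵢ (ΛF : Set (E →L[ℝ] F)) (ΛG : Set (E →L[ℝ] G)) :
    {T | ∃ L ∈ ΛF, ∃ M ∈ ΛG, T = L.prod M} = prodₗᵢ ℝ '' ΛF ×ˢ ΛG := by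
  ext T
  constructor
  · rintro ⟨L, hL, M, hM, rfl⟩
    exact ⟨(L, M), ⟨hL, hM⟩, rfl⟩
  · rintro ⟨⟨L, M⟩, ⟨hL, hM⟩, rfl⟩
    exact ⟨L, hL, M, hM, rfl⟩

theorem infDist_prod_le (L : E →L[ℝ] F) (M : E →L[ℝ] G) (ΛF : Set (E →L[ℝ] F))
    (ΛG : Set (E →L[ℝ] G)) :
    infDist (L.prod M) {T | ∃ L ∈ ΛF, ∃ M ∈ ΛG, T = L.prod M} ≤
      max (infDist L ΛF) (infDist M ΛG) := by
  rw [setOf_prod_eq_image_prodₗᵢ]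
  calc infDist (prodₗᵢ ℝ (L, M)) (prodₗᵢ ℝ '' ΛF ×ˢ ΛG) = infDist (L, M) (ΛF ×ˢ ΛG) :=
        Metric.infDist_image (prodₗᵢ ℝ).isometry
    _ ≤ _ := Metric.infDist_prod_le (L, M) ΛF ΛG

end ContinuousLinearMap

section

variable {E F G : Type*} [NormedAddCommGroup E] [NormedSpace ℝ E]
  [NormedAddCommGroup F] [NormedSpace ℝ F] [NormedAddCommGroup G] [NormedSpace ℝ G]

theorem IsQDQ.prod {ΛF : Set (E →L[ℝ] F)} {ΛG : Set (E →L[ℝ] G)} {Fm : E → Set F}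
    {Gm : E → Set G} {x₀ : E} {yF : F} {yG : G} {ΓF ΓG : Set E}
    (hF : IsQDQ ΛF Fm x₀ yF ΓF) (hG : IsQDQ ΛG Gm x₀ yG ΓG) :
    IsQDQ {T | ∃ L ∈ ΛF, ∃ M ∈ ΛG, T = L.prod M} (fun x => Fm x ×ˢ Gm x) x₀ (yF, yG)
      (ΓF ∩ ΓG) := by
  obtain ⟨hΛF, ρF, hρF, hFδ⟩ := hF
  obtain ⟨hΛG, ρG, hρG, hGδ⟩ := hG
  refine ⟨?_, ρF + ρG, hρF.add hρG, fun δ hδ hρδ => ?_⟩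
  · rw [ContinuousLinearMap.setOf_prod_eq_image_prodₗᵢ]
    exact (hΛF.prod hΛG).image (ContinuousLinearMap.prodₗᵢ ℝ).continuous
  have hρFδ : ρF δ ≠ ⊤ := (le_self_add.trans_lt hρδ).ne
  have hρGδ : ρG δ ≠ ⊤ := (le_add_self.trans_lt hρδ).ne
  obtain ⟨LF, hF, hF_cont, hF_bound⟩ := hFδ δ hδ hρFδ.lt_top
  obtain ⟨LG, hG, hG_cont, hG_bound⟩ := hGδ δ hδ hρGδ.lt_top
  refine ⟨fun x => (LF x).prod (LG x), fun x => (hF x, hG x), ?_, fun x hx => ?_⟩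
  · have hsubF : closedBall x₀ δ ∩ (ΓF ∩ ΓG) ⊆ closedBall x₀ δ ∩ ΓF :=
      Set.inter_subset_inter_right _ Set.inter_subset_left
    have hsubG : closedBall x₀ δ ∩ (ΓF ∩ ΓG) ⊆ closedBall x₀ δ ∩ ΓG :=
      Set.inter_subset_inter_right _ Set.inter_subset_right
    have hcombine : Continuous fun p : ((E →L[ℝ] F) × F) × ((E →L[ℝ] G) × G) =>
        (p.1.1.prod p.2.1, (p.1.2, p.2.2)) :=
      ((ContinuousLinearMap.prodₗᵢ ℝ).continuous.comp
        (continuous_fst.fst.prodMk continuous_snd.fst)).prodMk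
        (continuous_fst.snd.prodMk continuous_snd.snd)
    exact hcombine.comp_continuousOn ((hF_cont.mono hsubF).prodMk (hG_cont.mono hsubG))
  obtain ⟨hLF, hhF, hmemF⟩ := hF_bound x ⟨hx.1, hx.2.1⟩
  obtain ⟨hLG, hhG, hmemG⟩ := hG_bound x ⟨hx.1, hx.2.2⟩
  have hρF_le : (ρF δ).toReal ≤ ((ρF + ρG) δ).toReal := by
    rw [Pi.add_apply, ENNReal.toReal_add hρFδ hρGδ]
    exact le_add_of_nonneg_right ENNReal.toReal_nonneg
  have hρG_le : (ρG δ).toReal ≤ ((ρF + ρG) δ).toReal := by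
    rw [Pi.add_apply, ENNReal.toReal_add hρFδ hρGδ]
    exact le_add_of_nonneg_left ENNReal.toReal_nonneg
  refine ⟨?_, ?_, hmemF, hmemG⟩
  · exact (ContinuousLinearMap.infDist_prod_le _ _ _ _).trans
      (max_le (hLF.trans hρF_le) (hLG.trans hρG_le))
  · rw [Prod.norm_def]
    exact max_le (hhF.trans (by gcongr)) (hhG.trans (by gcongr))

end

theorem isQDQ_prod {N n m : ℕ}
    {F : EuclideanSpace ℝ (Fin N) → Set (EuclideanSpace ℝ (Fin n))}
    {G : EuclideanSpace ℝ (Fin N) → Set (EuclideanSpace ℝ (Fin m))}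
    {ΓF ΓG : Set (EuclideanSpace ℝ (Fin N))} {x₀ : EuclideanSpace ℝ (Fin N)}
    {yF : EuclideanSpace ℝ (Fin n)} {yG : EuclideanSpace ℝ (Fin m)}
    {ΛF : Set (EuclideanSpace ℝ (Fin N) →L[ℝ] EuclideanSpace ℝ (Fin n))}
    {ΛG : Set (EuclideanSpace ℝ (Fin N) →L[ℝ] EuclideanSpace ℝ (Fin m))}
    (hF : IsQDQ ΛF F x₀ yF ΓF) (hG : IsQDQ ΛG G x₀ yG ΓG) :
    IsQDQ {T | ∃ L ∈ ΛF, ∃ M ∈ ΛG, T = L.prod M}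
      (fun x => F x ×ˢ G x) x₀ (yF, yG) (ΓF ∩ ΓG) :=
  hF.prod hG
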